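/- Let G be a star triangle graph with t triangles. Then the ideal I(G)^{t+1} has a minimal monomial generator of degree 2t+1; in fact, the product of all 2t+1 variables (vertices of G) is a minimal generator of I(G)^{t+1}. -/

import Mathlib

open MvPolynomial

noncomputable section

/-! Generalities on graded pieces, Betti numbers and Castelnuovo–Mumford regularity
of homogeneous ideals in a polynomial ring, via the Koszul complex. -/

variable (K : Type) [Field K] (n : ℕ)

/-- The degree `d` graded piece of an ideal `I ⊆ K[x_1, …, x_n]`, as a `K`-subspace
(`⊥` for negative `d`). -/
def degPiece (I : Ideal (MvPolynomial (Fin n) K)) (d : ℤ) :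
    Submodule K (MvPolynomial (Fin n) K) :=
  if 0 ≤ d then (Submodule.restrictScalars K I) ⊓ homogeneousSubmodule (Fin n) K d.toNat
  else ⊥

theorem mulX_mem (I : Ideal (MvPolynomial (Fin n) K)) (k : Fin n) (d : ℤ)
    {x : MvPolynomial (Fin n) K} (hx : x ∈ degPiece K n I d) :
    (X k : MvPolynomial (Fin n) K) * x ∈ degPiece K n I (d + 1) := by
  by_cases h : 0 ≤ d
  · rw [degPiece, if_pos h, Submodule.mem_inf] at hx
    rw [degPiece, if_pos (by omega : (0:ℤ) ≤ d + 1), Submodule.mem_inf]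
    constructor
    · exact Ideal.mul_mem_left I _ hx.1
    · rw [mem_homogeneousSubmodule]
      have h2 := (isHomogeneous_X K k).mul ((mem_homogeneousSubmodule _ _).1 hx.2)
      have h3 : (d + 1).toNat = 1 + d.toNat := by omega
      rw [h3]
      exact h2
  · rw [degPiece, if_neg h, Submodule.mem_bot] at hx
    subst hx
    rw [mul_zero]
    exact Submodule.zero_mem _

/-- Multiplication by the variable `x_k`, as a map between graded pieces. -/
def mulXmap (I : Ideal (MvPolynomial (Fin n) K)) (k : Fin n) (d e : ℤ) (h : e = d + 1) :
    degPiece K n I d →ₗ[K] degPiece K n I e :=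
  LinearMap.restrict (LinearMap.mulLeft K (X k)) (by
    intro x hx
    subst h
    simpa using mulX_mem K n I k d hx)

/-- The differential, in internal degree `j`, of the complex obtained by tensoring the
ideal `I` with the Koszul complex on `x_1, …, x_n`; its homology computes
`Tor_i(I, K)_j`, whose dimension is the graded Betti number `β_{i,j}(I)`. -/
def koszulD (I : Ideal (MvPolynomial (Fin n) K)) (j i : ℕ) :
    ({T : Finset (Fin n) // T.card = i + 1} → degPiece K n I ((j : ℤ) - (i + 1)))
      →ₗ[K] ({T : Finset (Fin n) // T.card = i} → degPiece K n I ((j : ℤ) - i)) :=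
  LinearMap.pi fun T => ∑ k : Fin n,
    if h : k ∈ T.1 then 0
    else ((-1 : K) ^ (T.1.filter (fun l => l < k)).card) •
      ((mulXmap K n I k ((j : ℤ) - (i + 1)) ((j : ℤ) - i) (by ring)).comp
        (LinearMap.proj (⟨insert k T.1, by
          rw [Finset.card_insert_of_notMem h, T.2]⟩ : {T : Finset (Fin n) // T.card = i + 1})))

/-- The cycles of the (internal degree `j`) Koszul complex of `I` in homological degree `i`. -/
def kerChain (I : Ideal (MvPolynomial (Fin n) K)) (j : ℕ) :
    (i : ℕ) → Submodule K ({T : Finset (Fin n) // T.card = i} → degPiece K n I ((j : ℤ) - i))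
  | 0 => ⊤
  | (i + 1) => LinearMap.ker (koszulD K n I j i)

/-- The graded Betti number `β_{i,j}(I) = dim_K Tor_i(I, K)_j`. -/
def betti (I : Ideal (MvPolynomial (Fin n) K)) (i j : ℕ) : ℕ :=
  Module.finrank K (kerChain K n I j i) -
    Module.finrank K
      ((LinearMap.range (koszulD K n I j i) ⊓ kerChain K n I j i) : Submodule K _)

/-- The Castelnuovo–Mumford regularity `reg(I) = max { j - i | β_{i,j}(I) ≠ 0 }`. -/
def reg (I : Ideal (MvPolynomial (Fin n) K)) : ℤ :=
  sSup {r : ℤ | ∃ i j : ℕ, betti K n I i j ≠ 0 ∧ r = (j : ℤ) - i}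

/-- The squarefree part of a monomial ideal: the ideal generated by the squarefree
monomials belonging to it. -/
def sqfreePart (I : Ideal (MvPolynomial (Fin n) K)) : Ideal (MvPolynomial (Fin n) K) :=
  Ideal.span {m | m ∈ I ∧ ∃ A : Finset (Fin n), m = ∏ v ∈ A, X v}

/-- The `s`-th symbolic power of a (squarefree monomial) ideal:
the intersection of the `s`-th powers of its minimal primes; `S` for `s ≤ 0`. -/
def symbPow (I : Ideal (MvPolynomial (Fin n) K)) (s : ℤ) : Ideal (MvPolynomial (Fin n) K) :=
  if s ≤ 0 then ⊤ else ⨅ p ∈ I.minimalPrimes, p ^ s.toNat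

/-- `ssp I s` is `I^{s}`, the squarefree part of the `s`-th symbolic power of `I`. -/
def ssp (I : Ideal (MvPolynomial (Fin n) K)) (s : ℤ) : Ideal (MvPolynomial (Fin n) K) :=
  sqfreePart K n (symbPow K n I s)

/-- `sqPow I s` is `I^[s]`, the squarefree part of the ordinary power `I^s`. -/
def sqPow (I : Ideal (MvPolynomial (Fin n) K)) (s : ℕ) : Ideal (MvPolynomial (Fin n) K) :=
  sqfreePart K n (I ^ s)

/-- The height of an ideal: the minimum of the heights of its minimal primes. -/
def heightI (I : Ideal (MvPolynomial (Fin n) K)) : ℕ∞ :=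
  ⨅ p : I.minimalPrimes, Order.height (⟨p.1, p.2.1.1⟩ : PrimeSpectrum (MvPolynomial (Fin n) K))

/-- The colon ideal `(I : u)`. -/
def colonOf (I : Ideal (MvPolynomial (Fin n) K)) (u : MvPolynomial (Fin n) K) :
    Ideal (MvPolynomial (Fin n) K) :=
  Submodule.colon I (Ideal.span {u})

/-- `u` is a minimal monomial generator of the monomial ideal `I`:
`u` is a monomial belonging to `I` and `u/x_k ∉ I` for every variable `x_k` dividing `u`. -/
def IsMinGen (I : Ideal (MvPolynomial (Fin n) K)) (u : MvPolynomial (Fin n) K) : Prop :=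
  ∃ d : Fin n →₀ ℕ, u = monomial d (1 : K) ∧ u ∈ I ∧
    ∀ k : Fin n, d k ≠ 0 → monomial (d - Finsupp.single k 1) (1 : K) ∉ I

/-! Graph-theoretic notions. -/

/-- The graph obtained from `G` by deleting the vertices in `U` (and all edges meeting `U`),
on the same vertex set. -/
def delVerts (G : SimpleGraph (Fin n)) (U : Set (Fin n)) : SimpleGraph (Fin n) where
  Adj v w := G.Adj v w ∧ v ∉ U ∧ w ∉ U
  symm := ⟨fun _ _ h => ⟨h.1.symm, h.2.2, h.2.1⟩⟩
  loopless := ⟨fun v h => G.irrefl h.1⟩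


/-- The edge ideal `I(G)` of a graph `G` on the vertex set `{x_1, …, x_n}`. -/
def edgeIdeal (G : SimpleGraph (Fin n)) : Ideal (MvPolynomial (Fin n) K) :=
  Ideal.span {m | ∃ v w, G.Adj v w ∧ m = X v * X w}

/-- `a`, `b` enumerate the endpoints of a matching of `G` of size `k`:
the edges `a i b i` are pairwise disjoint edges of `G`. -/
def IsMatching (G : SimpleGraph (Fin n)) (k : ℕ) (a b : Fin k → Fin n) : Prop :=
  (∀ i, G.Adj (a i) (b i)) ∧
    ∀ i j, i ≠ j → a i ≠ a j ∧ b i ≠ b j ∧ a i ≠ b j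

/-- The matching number `match(G)`. -/
def matchNum (G : SimpleGraph (Fin n)) : ℕ :=
  sSup {k | ∃ a b : Fin k → Fin n, IsMatching n G k a b}

/-- An induced matching: a matching such that no edge of `G` other than the matching edges
joins two of its vertices. -/
def IsInducedMatching (G : SimpleGraph (Fin n)) (k : ℕ) (a b : Fin k → Fin n) : Prop :=
  IsMatching n G k a b ∧ ∀ i j, i ≠ j →
    ¬ G.Adj (a i) (a j) ∧ ¬ G.Adj (a i) (b j) ∧ ¬ G.Adj (b i) (a j) ∧ ¬ G.Adj (b i) (b j)

/-- The induced matching number `ind-match(G)`. -/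
def indMatchNum (G : SimpleGraph (Fin n)) : ℕ :=
  sSup {k | ∃ a b : Fin k → Fin n, IsInducedMatching n G k a b}

/-- An ordered matching `{a_i b_i}`: the `a_i` form an independent set and
`a_i b_j ∈ E(G)` implies `i ≤ j`. -/
def IsOrderedMatching (G : SimpleGraph (Fin n)) (k : ℕ) (a b : Fin k → Fin n) : Prop :=
  IsMatching n G k a b ∧ (∀ i j, ¬ G.Adj (a i) (a j)) ∧ ∀ i j, G.Adj (a i) (b j) → i ≤ j

/-- The ordered matching number `ord-match(G)`. -/
def ordMatchNum (G : SimpleGraph (Fin n)) : ℕ :=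
  sSup {k | ∃ a b : Fin k → Fin n, IsOrderedMatching n G k a b}

/-- A graph is chordal if it has no induced cycle of length at least four. -/
def IsChordal (G : SimpleGraph (Fin n)) : Prop :=
  ∀ k : ℕ, 4 ≤ k → ∀ f : ZMod k → Fin n, Function.Injective f →
    ¬ (∀ i j : ZMod k, G.Adj (f i) (f j) ↔ (j = i + 1 ∨ i = j + 1))


/-- The star triangle graph with `t` triangles: vertex `0` is the common vertex of all the
triangles, and for `0 ≤ i < t` the vertices `2i+1`, `2i+2` are the other two vertices of the
`i`-th triangle. -/
def starTriangle (t : ℕ) : SimpleGraph (Fin (2 * t + 1)) where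
  Adj u v := u ≠ v ∧ ((u : ℕ) = 0 ∨ (v : ℕ) = 0 ∨ ((u : ℕ) - 1) / 2 = ((v : ℕ) - 1) / 2)
  symm := by
    constructor
    intro u v h
    exact ⟨h.1.symm, by tauto⟩
  loopless := by constructor; intro u h; exact h.1 rfl

end

/-!
A prime containing `I(G)` contains the variables of a vertex cover of `G`, and a vertex cover of
the star triangle has at least `t + 1` vertices (the centre and one vertex of each outer edge, or
else all `2t` outer vertices). Hence `∏ x_v ∈ p ^ (t + 1)` for every minimal prime `p`.
Conversely, every vertex `k` lies in a minimal vertex cover `C` with `t + 1` vertices; then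
`(x_v : v ∈ C)` is a minimal prime of `I(G)`, and `∏_{v ≠ k} x_v` has degree only `t` in the
variables of `C`, so it does not lie in `(x_v : v ∈ C) ^ (t + 1)`.
-/

open Finset

namespace MvPolynomial

variable {σ R : Type*}

section CommSemiring

variable [CommSemiring R]

theorem prod_X_eq_monomial (A : Finset σ) :
    (∏ v ∈ A, X v : MvPolynomial σ R) = monomial (∑ v ∈ A, Finsupp.single v 1) 1 :=
  (monomial_sum_one A _).symm

theorem mem_of_X_mem_span_X_image [Nontrivial R] {C : Set σ} {w : σ}
    (h : (X w : MvPolynomial σ R) ∈ Ideal.span (X '' C)) : w ∈ C := by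
  obtain ⟨v, hv, hne⟩ := mem_ideal_span_X_image.1 h (Finsupp.single w 1) (by simp [support_X])
  rwa [← (Finsupp.single_apply_ne_zero.1 hne).1]

theorem le_sum_of_mem_support_of_mem_span_X_image_pow {C : Finset σ} {s : ℕ}
    {p : MvPolynomial σ R} (hp : p ∈ Ideal.span (X '' (C : Set σ)) ^ s)
    {e : σ →₀ ℕ} (he : e ∈ p.support) : s ≤ ∑ v ∈ C, e v := by
  classical
  induction s generalizing p e with
  | zero => exact Nat.zero_le _
  | succ s ih =>
    rw [pow_succ] at hp
    refine Submodule.mul_induction_on (C := fun p => ∀ e ∈ p.support, s + 1 ≤ ∑ v ∈ C, e v) hp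
      (fun a ha b hb e he => ?_) (fun x y hx hy e he => ?_) e he
    · obtain ⟨e₁, he₁, e₂, he₂, rfl⟩ := Finset.mem_add.1 (support_mul a b he)
      obtain ⟨v, hv, hne⟩ := mem_ideal_span_X_image.1 hb e₂ he₂
      have hb₁ : 1 ≤ ∑ w ∈ C, e₂ w :=
        (Nat.one_le_iff_ne_zero.2 hne).trans (single_le_sum (fun _ _ => Nat.zero_le _) hv)
      simpa only [Finsupp.add_apply, sum_add_distrib] using add_le_add (ih ha he₁) hb₁
    · rcases Finset.mem_union.1 (support_add he) with h | h
      exacts [hx e h, hy e h]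

theorem card_inter_le_of_prod_X_mem_span_X_image_pow [Nontrivial R] [DecidableEq σ]
    {C A : Finset σ} {s : ℕ}
    (h : (∏ v ∈ A, X v : MvPolynomial σ R) ∈ Ideal.span (X '' (C : Set σ)) ^ s) :
    s ≤ #(C ∩ A) := by
  rw [prod_X_eq_monomial] at h
  have := le_sum_of_mem_support_of_mem_span_X_image_pow h
    (by rw [mem_support_iff, coeff_monomial, if_pos rfl]; exact one_ne_zero)
  simpa [Finsupp.finsetSum_apply, Finsupp.single_apply, Finset.filter_mem_eq_inter] using this

end CommSemiring

section CommRing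

variable [CommRing R]

open Classical in
noncomputable def killVars (C : Set σ) : MvPolynomial σ R →ₐ[R] MvPolynomial σ R :=
  aeval fun v => if v ∈ C then 0 else X v

theorem sub_killVars_mem_span_X_image (C : Set σ) (p : MvPolynomial σ R) :
    p - killVars C p ∈ Ideal.span (X '' C : Set (MvPolynomial σ R)) := by
  induction p using MvPolynomial.induction_on with
  | C r => simp [killVars]
  | add p q hp hq =>
    convert Ideal.add_mem _ hp hq using 1
    rw [map_add]; ring
  | mul_X p v hp =>
    have hsplit : p * X v - killVars C (p * X v)
        = (p - killVars C p) * X v + killVars C p * (X v - killVars C (X v)) := by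
      rw [map_mul]; ring
    rw [hsplit]
    refine Ideal.add_mem _ (Ideal.mul_mem_right _ _ hp) (Ideal.mul_mem_left _ _ ?_)
    by_cases hv : v ∈ C
    · simpa [killVars, hv] using
        (Ideal.subset_span ⟨v, hv, rfl⟩ : X v ∈ Ideal.span (X '' C : Set (MvPolynomial σ R)))
    · simp [killVars, hv]

theorem span_X_image_eq_ker_killVars (C : Set σ) :
    Ideal.span (X '' C : Set (MvPolynomial σ R)) = RingHom.ker (killVars C : _ →ₐ[R] _) := by
  refine le_antisymm (Ideal.span_le.2 ?_) fun p hp => ?_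
  · rintro _ ⟨v, hv, rfl⟩
    simp [killVars, hv]
  · simpa [RingHom.mem_ker.1 hp] using sub_killVars_mem_span_X_image C p

theorem isPrime_span_X_image [IsDomain R] (C : Set σ) :
    (Ideal.span (X '' C : Set (MvPolynomial σ R))).IsPrime := by
  rw [span_X_image_eq_ker_killVars]
  exact RingHom.ker_isPrime _

end CommRing

end MvPolynomial

open MvPolynomial

section EdgeIdeal

variable {K : Type} [Field K] {n : ℕ} {G : SimpleGraph (Fin n)}

theorem sqfreePart_le (I : Ideal (MvPolynomial (Fin n) K)) : sqfreePart K n I ≤ I :=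
  Ideal.span_le.2 fun _ hm => hm.1

theorem mem_symbPow_iff (I : Ideal (MvPolynomial (Fin n) K)) {s : ℕ} (hs : s ≠ 0)
    {x : MvPolynomial (Fin n) K} : x ∈ symbPow K n I s ↔ ∀ p ∈ I.minimalPrimes, x ∈ p ^ s := by
  rw [symbPow, if_neg (by omega), Int.toNat_natCast]
  simp only [Submodule.mem_iInf]

theorem X_mul_X_mem_edgeIdeal {v w : Fin n} (h : G.Adj v w) :
    (X v * X w : MvPolynomial (Fin n) K) ∈ edgeIdeal K n G :=
  Ideal.subset_span ⟨v, w, h, rfl⟩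

theorem isVertexCover_setOf_X_mem {p : Ideal (MvPolynomial (Fin n) K)} (hp : p.IsPrime)
    (hGp : edgeIdeal K n G ≤ p) : G.IsVertexCover {v | X v ∈ p} :=
  fun _ _ h => hp.mem_or_mem (hGp (X_mul_X_mem_edgeIdeal h))

theorem edgeIdeal_le_span_X_image {C : Set (Fin n)} (hC : G.IsVertexCover C) :
    edgeIdeal K n G ≤ Ideal.span (X '' C) := by
  refine Ideal.span_le.2 ?_
  rintro _ ⟨v, w, h, rfl⟩
  rcases hC h with hv | hw
  · exact Ideal.mul_mem_right _ _ (Ideal.subset_span ⟨v, hv, rfl⟩)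
  · exact Ideal.mul_mem_left _ _ (Ideal.subset_span ⟨w, hw, rfl⟩)

theorem span_X_image_mem_minimalPrimes_edgeIdeal {C : Set (Fin n)} (hC : G.IsVertexCover C)
    (hout : ∀ c ∈ C, ∃ w ∉ C, G.Adj c w) :
    Ideal.span (X '' C) ∈ (edgeIdeal K n G).minimalPrimes := by
  refine ⟨⟨isPrime_span_X_image C, edgeIdeal_le_span_X_image hC⟩, fun q ⟨hq, hGq⟩ hqC => ?_⟩
  refine Ideal.span_le.2 ?_
  rintro _ ⟨c, hc, rfl⟩
  obtain ⟨w, hw, hcw⟩ := hout c hc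
  exact (hq.mem_or_mem (hGq (X_mul_X_mem_edgeIdeal hcw))).resolve_right
    fun hwq => hw (mem_of_X_mem_span_X_image (hqC hwq))

theorem prod_X_mem_symbPow_edgeIdeal {s : ℕ} (hs : s ≠ 0)
    (hG : ∀ C : Finset (Fin n), G.IsVertexCover C → s ≤ #C) :
    (∏ v, X v : MvPolynomial (Fin n) K) ∈ symbPow K n (edgeIdeal K n G) s := by
  classical
  refine (mem_symbPow_iff _ hs).2 fun p hp => ?_
  set S := univ.filter fun v => (X v : MvPolynomial (Fin n) K) ∈ p
  have hS : s ≤ #S := hG S (by simpa [S] using isVertexCover_setOf_X_mem hp.1.1 hp.1.2)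
  have hprod : ∏ v ∈ S, (X v : MvPolynomial (Fin n) K) ∈ p ^ #S := by
    simpa using Ideal.prod_mem_prod (s := S) (I := fun _ => p) fun v hv => (mem_filter.1 hv).2
  rw [← prod_mul_prod_compl S]
  exact Ideal.mul_mem_right _ _ (Ideal.pow_le_pow_right hS hprod)

theorem prod_X_notMem_symbPow_edgeIdeal {C A : Finset (Fin n)} {s : ℕ}
    (hC : G.IsVertexCover C) (hout : ∀ c ∈ C, ∃ w ∉ C, G.Adj c w) (hCA : #(C ∩ A) < s) :
    (∏ v ∈ A, X v : MvPolynomial (Fin n) K) ∉ symbPow K n (edgeIdeal K n G) s := fun h =>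
  hCA.not_ge <| card_inter_le_of_prod_X_mem_span_X_image_pow <|
    (mem_symbPow_iff _ (by omega)).1 h _ (span_X_image_mem_minimalPrimes_edgeIdeal hC hout)

end EdgeIdeal

section StarTriangle

variable {t : ℕ}

theorem le_card_of_isVertexCover_starTriangle (ht : 1 ≤ t) {C : Finset (Fin (2 * t + 1))}
    (hC : (starTriangle t).IsVertexCover C) : t + 1 ≤ #C := by
  by_cases h0 : (0 : Fin (2 * t + 1)) ∈ C
  · -- `(v - 1) / 2` is the index of the triangle containing the outer vertex `v`.
    have hsurj :
        Set.SurjOn (fun v : Fin (2 * t + 1) => ((v : ℕ) - 1) / 2) (C.erase 0) (range t) := by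
      intro i hi
      have hi : i < t := by simpa using hi
      have hadj : (starTriangle t).Adj ⟨2 * i + 1, by omega⟩ ⟨2 * i + 2, by omega⟩ := by
        simp only [starTriangle, ne_eq, Fin.ext_iff]; omega
      rcases hC hadj with h | h
      · exact ⟨_, mem_erase.2 ⟨by simp [Fin.ext_iff], h⟩, by simp only; omega⟩
      · exact ⟨_, mem_erase.2 ⟨by simp [Fin.ext_iff], h⟩, by simp only; omega⟩
    have := card_le_card_of_surjOn _ hsurj
    rw [card_range] at this
    rw [← card_erase_add_one h0]
    omega
  · have hsub : univ.erase 0 ⊆ C := fun v hv =>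
      (hC (show (starTriangle t).Adj 0 v from ⟨(ne_of_mem_erase hv).symm, Or.inl rfl⟩)).resolve_left
        h0
    have := card_le_card hsub
    rw [card_erase_of_mem (mem_univ _), card_univ, Fintype.card_fin] at this
    omega

/-- Each triangle `{0, 2i+1, 2i+2}` has exactly one outer vertex of each parity, so this is a
minimal vertex cover through `k`. -/
def starTriangleCover (t : ℕ) (k : Fin (2 * t + 1)) : Finset (Fin (2 * t + 1)) :=
  univ.filter fun v => (v : ℕ) = 0 ∨ (v : ℕ) % 2 = (k : ℕ) % 2

theorem self_mem_starTriangleCover (k : Fin (2 * t + 1)) : k ∈ starTriangleCover t k := by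
  simp [starTriangleCover]

theorem isVertexCover_starTriangleCover (k : Fin (2 * t + 1)) :
    (starTriangle t).IsVertexCover (starTriangleCover t k) := by
  intro u v h
  simp only [starTriangle, ne_eq, Fin.ext_iff] at h
  simp only [starTriangleCover, coe_filter, mem_univ, true_and, Set.mem_ofPred_eq]
  omega

theorem card_starTriangleCover_le (k : Fin (2 * t + 1)) : #(starTriangleCover t k) ≤ t + 1 := by
  have hinj : Set.InjOn (fun v : Fin (2 * t + 1) => ((v : ℕ) - 1) / 2)
      ((starTriangleCover t k).erase 0) := by
    intro u hu v hv huv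
    simp only [coe_erase, starTriangleCover, coe_filter, mem_univ, true_and, Set.mem_sdiff,
      Set.mem_ofPred_eq, Set.mem_singleton_iff, Fin.ext_iff, Fin.val_zero] at hu hv huv
    exact Fin.ext (by omega)
  have hmaps : Set.MapsTo (fun v : Fin (2 * t + 1) => ((v : ℕ) - 1) / 2)
      ((starTriangleCover t k).erase 0) (range t) := by
    intro v hv
    simp only [coe_erase, Set.mem_sdiff, Set.mem_singleton_iff, Fin.ext_iff, Fin.val_zero] at hv
    simp only [coe_range, Set.mem_Iio]
    omega
  have := card_le_card_of_injOn _ hmaps hinj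
  have := pred_card_le_card_erase (s := starTriangleCover t k) (a := 0)
  rw [card_range] at *
  omega

theorem exists_adj_notMem_starTriangleCover (ht : 1 ≤ t) (k : Fin (2 * t + 1)) :
    ∀ c ∈ starTriangleCover t k, ∃ w ∉ starTriangleCover t k, (starTriangle t).Adj c w := by
  intro c hc
  simp only [starTriangleCover, mem_filter, mem_univ, true_and] at hc
  by_cases hc0 : (c : ℕ) = 0
  · refine ⟨⟨1 + (k : ℕ) % 2, by omega⟩, ?_, ?_⟩ <;>
      simp only [starTriangleCover, starTriangle, mem_filter, mem_univ, true_and, ne_eq,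
        Fin.ext_iff] <;> omega
  · obtain ⟨m, hm⟩ := Nat.even_or_odd' (c : ℕ)
    -- the other outer vertex of the triangle of `c`
    refine ⟨⟨c + 2 * (c % 2) - 1, by omega⟩, ?_, ?_⟩ <;>
      simp only [starTriangleCover, starTriangle, mem_filter, mem_univ, true_and, ne_eq,
        Fin.ext_iff] <;> omega

end StarTriangle

/-- For the star triangle graph with `t` triangles, the product of all
`2t+1` variables is a minimal monomial generator of `I(G)^{t+1}`; in particular
`I(G)^{t+1}` has a minimal monomial generator of degree `2t+1`. -/
theorem starTriangle_ssp_min_gen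
    (K : Type) [Field K] (t : ℕ) (ht : 1 ≤ t) :
    IsMinGen K (2 * t + 1)
        (ssp K (2 * t + 1) (edgeIdeal K (2 * t + 1) (starTriangle t)) ((t : ℤ) + 1))
        (∏ v : Fin (2 * t + 1), X v) ∧
      (∏ v : Fin (2 * t + 1), (X v : MvPolynomial (Fin (2 * t + 1)) K)).totalDegree =
        2 * t + 1 := by
  have hmem : (∏ v, X v : MvPolynomial (Fin (2 * t + 1)) K) ∈
      symbPow K _ (edgeIdeal K _ (starTriangle t)) ((t : ℤ) + 1) := by
    exact_mod_cast prod_X_mem_symbPow_edgeIdeal t.succ_ne_zero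
      fun C hC => le_card_of_isVertexCover_starTriangle ht hC
  have hquot (k : Fin (2 * t + 1)) :
      (∏ v ∈ univ.erase k, X v : MvPolynomial (Fin (2 * t + 1)) K) ∉
        symbPow K _ (edgeIdeal K _ (starTriangle t)) ((t : ℤ) + 1) := by
    have hcard : #(starTriangleCover t k ∩ univ.erase k) < t + 1 := by
      rw [inter_erase, inter_univ, card_erase_of_mem (self_mem_starTriangleCover k)]
      have := card_starTriangleCover_le k
      omega
    exact_mod_cast prod_X_notMem_symbPow_edgeIdeal (isVertexCover_starTriangleCover k)
      (exists_adj_notMem_starTriangleCover ht k) hcard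
  refine ⟨⟨_, prod_X_eq_monomial univ, Ideal.subset_span ⟨hmem, univ, rfl⟩, fun k _ h => ?_⟩, ?_⟩
  · rw [← add_sum_erase univ _ (mem_univ k), add_tsub_cancel_left, ← prod_X_eq_monomial] at h
    exact hquot k (sqfreePart_le _ h)
  · have hhom := IsHomogeneous.prod (univ : Finset (Fin (2 * t + 1))) (fun v => X v) (fun _ => 1)
      fun v _ => isHomogeneous_X K v
    rw [hhom.totalDegree (prod_ne_zero_iff.2 fun v _ => X_ne_zero v)]
    simp
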